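/- arXiv:2407.09297 — 4 statements merged into one kernel-verified Lean document; each statement's English description precedes it below -/
import Mathlib

section
/- Let p : ℝ^n → ℝ be a smooth positive function, β ∈ ℝ, s = ∇ log p, and let γ : [0,1] → ℝ^n be a twice continuously differentiable solution of the geodesic equation γ̈ − 2β (s(γ) · γ̇) γ̇ + β s(γ) ‖γ̇‖² = 0 with γ̇(t) ≠ 0 for all t. Then there exists a strictly increasing C² diffeomorphism f : [0,1] → [0,1] solving f̈ = β (s(γ(t)) · φ̇(f(t))) ḟ², such that the reparameterized curve φ = γ ∘ f⁻¹ has constant Euclidean speed (‖φ̇(u)‖ is constant in u) and satisfies the reparameterized geodesic equation φ̈ − β (s(φ) · φ̇) φ̇ + β s(φ) ‖φ̇‖² = 0. -/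
open scoped RealInnerProductSpace

open Set intervalIntegral Topology Filter

-- auxiliary: equality on Icc from equality on Ioo by continuity
lemma eqOn_Icc_of_eqOn_Ioo {E : Type*} [NormedAddCommGroup E]
    {A R : ℝ → E} (hA : ContinuousOn A (Set.Icc 0 1)) (hR : ContinuousOn R (Set.Icc 0 1))
    (h : ∀ t ∈ Set.Ioo (0:ℝ) 1, A t = R t) : ∀ t ∈ Set.Icc (0:ℝ) 1, A t = R t := by
  intro t ht
  have hsub : Set.Ioo (0:ℝ) 1 ⊆ Set.Icc 0 1 := Set.Ioo_subset_Icc_self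
  have hcl : t ∈ closure (Set.Ioo (0:ℝ) 1) := by
    rw [closure_Ioo one_ne_zero.symm]; exact ht
  have hne : (𝓝[Set.Ioo (0:ℝ) 1] t).NeBot := mem_closure_iff_nhdsWithin_neBot.1 hcl
  have h1 : Filter.Tendsto A (𝓝[Set.Ioo (0:ℝ) 1] t) (𝓝 (A t)) :=
    ((hA t ht).mono hsub).tendsto
  have h2 : Filter.Tendsto A (𝓝[Set.Ioo (0:ℝ) 1] t) (𝓝 (R t)) := by
    refine Filter.Tendsto.congr' ?_ (((hR t ht).mono hsub).tendsto)
    filter_upwards [eventually_mem_nhdsWithin] with x hx using (h x hx).symm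
  exact tendsto_nhds_unique h1 h2

lemma beta_smul_zero_aux {E : Type*} [NormedAddCommGroup E] [InnerProductSpace ℝ E]
    {c : ℝ} {g x : E} (hg : g ≠ 0)
    (h : (2 * c * ⟪x, g⟫) • g = (c * ‖g‖ ^ 2) • x) : c • x = 0 := by
  have hgg : ⟪g, g⟫ = ‖g‖ ^ 2 := real_inner_self_eq_norm_sq g
  have hg2 : (0:ℝ) < ‖g‖ ^ 2 := by have := norm_pos_iff.2 hg; positivity
  have h1 : (2 * c * ⟪x, g⟫) * ⟪g, g⟫ = (c * ‖g‖ ^ 2) * ⟪x, g⟫ := by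
    have := congrArg (fun y => ⟪y, g⟫) h
    simpa [real_inner_smul_left] using this
  have h2 : c * ⟪x, g⟫ = 0 := by
    rw [hgg] at h1; nlinarith [h1]
  have h3 : (c * ‖g‖ ^ 2) • x = 0 := by
    rw [← h, show 2 * c * ⟪x, g⟫ = 2 * (c * ⟪x, g⟫) by ring, h2]
    simp
  have : c • x = (‖g‖ ^ 2)⁻¹ • ((c * ‖g‖ ^ 2) • x) := by
    rw [smul_smul]; congr 1; field_simp
  rw [this, h3, smul_zero]


set_option maxHeartbeats 1000000 in
/-- **Constant Euclidean speed reparameterization of Fermat geodesics.**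
If `γ : [0,1] → ℝⁿ` is a C² solution of the geodesic equation
`γ̈ − 2β (s(γ)·γ̇) γ̇ + β s(γ) ‖γ̇‖² = 0` with nonvanishing velocity, then there is a
strictly increasing C² diffeomorphism `f : [0,1] → [0,1]` solving
`f̈ = β (s(γ(t))·φ̇(f(t))) ḟ²`, such that `φ = γ ∘ f⁻¹` has constant Euclidean speed and
satisfies `φ̈ − β (s(φ)·φ̇) φ̇ + β s(φ) ‖φ̇‖² = 0`. -/
theorem fermat_geodesic_constant_speed_reparameterization
    (n : ℕ) (p : EuclideanSpace ℝ (Fin n) → ℝ) (β : ℝ)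
    (hp_smooth : ContDiff ℝ (⊤ : ℕ∞) p) (hp_pos : ∀ x, 0 < p x)
    (s : EuclideanSpace ℝ (Fin n) → EuclideanSpace ℝ (Fin n))
    (hs : ∀ x, s x = gradient (fun y => Real.log (p y)) x)
    (γ : ℝ → EuclideanSpace ℝ (Fin n))
    (hγ : ContDiffOn ℝ 2 γ (Set.Icc 0 1))
    (hvel : ∀ t ∈ Set.Icc (0 : ℝ) 1, deriv γ t ≠ 0)
    (hgeo : ∀ t ∈ Set.Icc (0 : ℝ) 1,
      deriv (deriv γ) t
        - (2 * β * ⟪s (γ t), deriv γ t⟫) • deriv γ t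
        + (β * ‖deriv γ t‖ ^ 2) • s (γ t) = 0) :
    ∃ f finv : ℝ → ℝ,
      -- `f` is a strictly increasing C² diffeomorphism of `[0,1]` onto itself,
      -- with inverse `finv` on `[0,1]`
      StrictMonoOn f (Set.Icc 0 1) ∧
      ContDiffOn ℝ 2 f (Set.Icc 0 1) ∧
      Set.MapsTo f (Set.Icc 0 1) (Set.Icc 0 1) ∧
      f 0 = 0 ∧ f 1 = 1 ∧
      (∀ t ∈ Set.Icc (0 : ℝ) 1, finv (f t) = t) ∧
      (∀ u ∈ Set.Icc (0 : ℝ) 1, f (finv u) = u) ∧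
      -- `f` solves `f̈ = β (s(γ(t)) · φ̇(f(t))) ḟ²`, where `φ = γ ∘ finv`
      (∀ t ∈ Set.Icc (0 : ℝ) 1,
        deriv (deriv f) t
          = β * ⟪s (γ t), deriv (γ ∘ finv) (f t)⟫ * (deriv f t) ^ 2) ∧
      -- `φ = γ ∘ finv` has constant Euclidean speed
      (∃ C : ℝ, ∀ u ∈ Set.Icc (0 : ℝ) 1, ‖deriv (γ ∘ finv) u‖ = C) ∧
      -- `φ = γ ∘ finv` satisfies the reparameterized geodesic equation
      (∀ u ∈ Set.Icc (0 : ℝ) 1,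
        deriv (deriv (γ ∘ finv)) u
          - (β * ⟪s ((γ ∘ finv) u), deriv (γ ∘ finv) u⟫) • deriv (γ ∘ finv) u
          + (β * ‖deriv (γ ∘ finv) u‖ ^ 2) • s ((γ ∘ finv) u) = 0) := by
  classical
  have hI : UniqueDiffOn ℝ (Set.Icc (0:ℝ) 1) := uniqueDiffOn_Icc one_pos
  -- γ is differentiable (in the full sense) at every point of [0,1]
  have hdγ : ∀ t ∈ Set.Icc (0:ℝ) 1, DifferentiableAt ℝ γ t := by
    intro t ht
    by_contra h
    exact hvel t ht (deriv_zero_of_not_differentiableAt h)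
  -- the within-derivative w agrees with deriv γ on [0,1]
  set w : ℝ → EuclideanSpace ℝ (Fin n) := derivWithin γ (Set.Icc 0 1) with hwdef
  have hwG : ∀ t ∈ Set.Icc (0:ℝ) 1, w t = deriv γ t := fun t ht =>
    (hdγ t ht).derivWithin (hI t ht)
  have hw1 : ContDiffOn ℝ 1 w (Set.Icc 0 1) := by
    apply hγ.derivWithin hI
    norm_num
  have hwne : ∀ t ∈ Set.Icc (0:ℝ) 1, w t ≠ 0 := by
    intro t ht
    rw [hwG t ht]; exact hvel t ht
  have hwcont : ContinuousOn w (Set.Icc 0 1) := hw1.continuousOn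
  have hwdiff : ∀ t ∈ Set.Icc (0:ℝ) 1, DifferentiableWithinAt ℝ w (Set.Icc 0 1) t :=
    fun t ht => (hw1.differentiableOn one_ne_zero) t ht
  -- the second within-derivative
  set A : ℝ → EuclideanSpace ℝ (Fin n) := derivWithin w (Set.Icc 0 1) with hAdef
  have hAcont : ContinuousOn A (Set.Icc 0 1) := hw1.continuousOn_derivWithin hI le_rfl
  have hwA : ∀ t ∈ Set.Icc (0:ℝ) 1, HasDerivWithinAt w (A t) (Set.Icc 0 1) t :=
    fun t ht => (hwdiff t ht).hasDerivWithinAt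
  -- s is continuous
  have hscont : Continuous s := by
    have hlog : ContDiff ℝ (⊤ : ℕ∞) fun y => Real.log (p y) :=
      hp_smooth.log fun x => (hp_pos x).ne'
    have hgrad : Continuous fun x => gradient (fun y => Real.log (p y)) x := by
      have h1 : Continuous fun x => fderiv ℝ (fun y => Real.log (p y)) x :=
        hlog.continuous_fderiv (by simp)
      exact (InnerProductSpace.toDual ℝ _).symm.continuous.comp h1
    have : s = fun x => gradient (fun y => Real.log (p y)) x := funext hs
    rw [this]; exact hgrad
  -- interior points: full differentiability of deriv γ, and identification with A
  have hwnhds : ∀ t ∈ Set.Ioo (0:ℝ) 1, Set.Icc (0:ℝ) 1 ∈ 𝓝 t := fun t ht =>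
    Icc_mem_nhds ht.1 ht.2
  have hwGev : ∀ t ∈ Set.Ioo (0:ℝ) 1, w =ᶠ[𝓝 t] deriv γ := by
    intro t ht
    filter_upwards [hwnhds t ht] with x hx using hwG x hx
  have hGdiff_int : ∀ t ∈ Set.Ioo (0:ℝ) 1, HasDerivAt (deriv γ) (A t) t := by
    intro t ht
    have h1 : HasDerivAt w (A t) t :=
      (hwA t (Set.Ioo_subset_Icc_self ht)).hasDerivAt (hwnhds t ht)
    exact h1.congr_of_eventuallyEq (hwGev t ht).symm
  -- identification of A with the geodesic right-hand side, on all of [0,1]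
  have hAform : ∀ t ∈ Set.Icc (0:ℝ) 1,
      A t = (2 * β * ⟪s (γ t), w t⟫) • w t - (β * ‖w t‖ ^ 2) • s (γ t) := by
    apply eqOn_Icc_of_eqOn_Ioo hAcont
    · apply ContinuousOn.sub
      · exact (continuousOn_const.mul
          ((ContinuousOn.inner (𝕜 := ℝ) (hscont.comp_continuousOn hγ.continuousOn) hwcont))).smul hwcont
      · exact (continuousOn_const.mul ((hwcont.norm).pow 2)).smul
          (hscont.comp_continuousOn hγ.continuousOn)
    · intro t ht
      have htI := Set.Ioo_subset_Icc_self ht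
      have h1 : HasDerivAt (deriv γ) (A t) t := hGdiff_int t ht
      have h2 := hgeo t htI
      rw [h1.deriv] at h2
      rw [hwG t htI]
      linear_combination (norm := module) h2
  -- norm of w and its derivative
  set m : ℝ → ℝ := fun t => ‖w t‖ with hmdef
  have hmpos : ∀ t ∈ Set.Icc (0:ℝ) 1, 0 < m t := fun t ht =>
    norm_pos_iff.2 (hwne t ht)
  have hmderiv : ∀ t ∈ Set.Icc (0:ℝ) 1,
      HasDerivWithinAt m (⟪w t, A t⟫ / m t) (Set.Icc 0 1) t := by
    intro t ht
    have hm0 : m t ≠ 0 := (norm_pos_iff.2 (hwne t ht)).ne'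
    have hq : HasDerivWithinAt (fun τ => ⟪w τ, w τ⟫) (2 * ⟪w t, A t⟫) (Set.Icc 0 1) t := by
      have := (hwA t ht).inner ℝ (hwA t ht)
      rw [real_inner_comm (w t) (A t), ← two_mul] at this
      exact this
    have hqt : ⟪w t, w t⟫ ≠ 0 := by
      rw [real_inner_self_eq_norm_sq]
      exact pow_ne_zero 2 hm0
    have hsqrt : HasDerivAt Real.sqrt (1 / (2 * Real.sqrt ⟪w t, w t⟫)) ⟪w t, w t⟫ :=
      Real.hasDerivAt_sqrt hqt
    have hcomp := hsqrt.comp_hasDerivWithinAt t hq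
    have hrw : ∀ τ, Real.sqrt ⟪w τ, w τ⟫ = m τ := by
      intro τ
      rw [real_inner_self_eq_norm_mul_norm, Real.sqrt_mul_self (norm_nonneg _)]
    have : HasDerivWithinAt m
        (1 / (2 * Real.sqrt ⟪w t, w t⟫) * (2 * ⟪w t, A t⟫)) (Set.Icc 0 1) t := by
      refine hcomp.congr (fun τ _ => ?_) ?_
      · simp only [Function.comp_apply]; exact (hrw τ).symm
      · simp only [Function.comp_apply]; exact (hrw t).symm
    convert this using 1
    rw [hrw t]
    field_simp
  have hm1 : ContDiffOn ℝ 1 m (Set.Icc 0 1) := hw1.norm ℝ hwne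
  have hmcont : ContinuousOn m (Set.Icc 0 1) := hm1.continuousOn
  set D : ℝ → ℝ := derivWithin m (Set.Icc 0 1) with hDdef
  have hDcont : ContinuousOn D (Set.Icc 0 1) := hm1.continuousOn_derivWithin hI le_rfl
  have hD : ∀ t ∈ Set.Icc (0:ℝ) 1, D t = ⟪w t, A t⟫ / m t := fun t ht =>
    (hmderiv t ht).derivWithin (hI t ht)
  have hD2 : ∀ t ∈ Set.Icc (0:ℝ) 1, D t = β * ⟪s (γ t), w t⟫ * m t := by
    intro t ht
    rw [hD t ht, hAform t ht]
    have hm : m t ≠ 0 := (hmpos t ht).ne'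
    rw [inner_sub_right, real_inner_smul_right, real_inner_smul_right]
    rw [real_inner_self_eq_norm_sq, real_inner_comm (w t) (s (γ t))]
    field_simp [hmdef]
    ring
  -- clamp to [0,1]
  set cl : ℝ → ℝ := fun t => max 0 (min 1 t) with hcldef
  have hclcont : Continuous cl := continuous_const.max (continuous_const.min continuous_id)
  have hclmem : ∀ t, cl t ∈ Set.Icc (0:ℝ) 1 :=
    fun t => ⟨le_max_left _ _, max_le zero_le_one (min_le_left _ _)⟩
  have hclid : ∀ t ∈ Set.Icc (0:ℝ) 1, cl t = t := by
    intro t ht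
    show max 0 (min 1 t) = t
    rw [min_eq_right ht.2, max_eq_right ht.1]
  -- continuous extension of D
  set aext : ℝ → ℝ := fun t => D (cl t) with haextdef
  have hacont : Continuous aext := hDcont.comp_continuous hclcont hclmem
  have haD : ∀ t ∈ Set.Icc (0:ℝ) 1, aext t = D t := by
    intro t ht
    show D (cl t) = D t
    rw [hclid t ht]
  -- C¹ extension of m
  set me : ℝ → ℝ := fun t => m 0 + ∫ u in (0:ℝ)..t, aext u with hmedef
  have hmed : ∀ t, HasDerivAt me (aext t) t := fun t =>
    ((hacont.integral_hasStrictDerivAt 0 t).hasDerivAt).const_add (m 0)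
  have hmecont : Continuous me :=
    continuous_iff_continuousAt.2 fun t => (hmed t).continuousAt
  have hmeeq : ∀ t ∈ Set.Icc (0:ℝ) 1, me t = m t := by
    intro t ht
    have h1 : ∫ u in (0:ℝ)..t, aext u = m t - m 0 := by
      apply integral_eq_sub_of_hasDeriv_right_of_le ht.1
      · exact hmcont.mono (Set.Icc_subset_Icc le_rfl ht.2)
      · intro x hx
        have hxIoo : x ∈ Set.Ioo (0:ℝ) 1 := ⟨hx.1, lt_of_lt_of_le hx.2 ht.2⟩
        have hxI : x ∈ Set.Icc (0:ℝ) 1 := Set.Ioo_subset_Icc_self hxIoo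
        have h2 : HasDerivAt m (aext x) x := by
          rw [haD x hxI, hD x hxI]
          exact (hmderiv x hxI).hasDerivAt (hwnhds x hxIoo)
        exact h2.hasDerivWithinAt
      · exact hacont.intervalIntegrable 0 t
    show m 0 + ∫ u in (0:ℝ)..t, aext u = m t
    rw [h1]; ring
  -- positivity of me on a neighborhood of [0,1]
  obtain ⟨δ, hδpos, hδmem⟩ :
      ∃ δ > (0:ℝ), ∀ t ∈ Set.Icc (-δ) (1+δ), 0 < me t := by
    have hS : IsOpen {t : ℝ | 0 < me t} := isOpen_lt continuous_const hmecont
    have hIS : Set.Icc (0:ℝ) 1 ⊆ {t : ℝ | 0 < me t} := by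
      intro t ht
      show 0 < me t
      rw [hmeeq t ht]; exact hmpos t ht
    obtain ⟨δ, hδpos, hδsub⟩ := isCompact_Icc.exists_cthickening_subset_open hS hIS
    refine ⟨δ, hδpos, fun t ht => ?_⟩
    refine hδsub ?_
    refine Metric.mem_cthickening_of_dist_le t (cl t) δ _ (hclmem t) ?_
    rcases le_total t 0 with h0 | h0
    · have hc : cl t = 0 := by
        show max 0 (min 1 t) = 0
        rw [min_eq_right (h0.trans zero_le_one), max_eq_left h0]
      rw [hc, Real.dist_eq, sub_zero, abs_le]
      constructor
      · exact ht.1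
      · linarith [hδpos.le]
    · rcases le_total t 1 with h1 | h1
      · rw [hclid t ⟨h0, h1⟩, dist_self]; exact hδpos.le
      · have hc : cl t = 1 := by
          show max 0 (min 1 t) = 1
          rw [min_eq_left h1, max_eq_right zero_le_one]
        rw [hc, Real.dist_eq, abs_le]
        constructor
        · linarith [hδpos.le]
        · linarith [ht.2]
  -- clamp to [-δ, 1+δ]
  set cl2 : ℝ → ℝ := fun t => max (-δ) (min (1+δ) t) with hcl2def
  have hcl2cont : Continuous cl2 := continuous_const.max (continuous_const.min continuous_id)
  have hδle : (-δ:ℝ) ≤ 1 + δ := by linarith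
  have hcl2mem : ∀ t, cl2 t ∈ Set.Icc (-δ) (1+δ) :=
    fun t => ⟨le_max_left _ _, max_le hδle (min_le_left _ _)⟩
  have hcl2id : ∀ t ∈ Set.Icc (-δ) (1+δ), cl2 t = t := by
    intro t ht
    show max (-δ) (min (1+δ) t) = t
    rw [min_eq_right ht.2, max_eq_right ht.1]
  set b : ℝ → ℝ := fun t => me (cl2 t) with hbdef
  have hbcont : Continuous b := hmecont.comp hcl2cont
  have hbpos : ∀ t, 0 < b t := fun t => hδmem _ (hcl2mem t)
  have hIsub : Set.Icc (0:ℝ) 1 ⊆ Set.Icc (-δ) (1+δ) :=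
    Set.Icc_subset_Icc (by linarith) (by linarith)
  have hbm : ∀ t ∈ Set.Icc (0:ℝ) 1, b t = m t := by
    intro t ht
    show me (cl2 t) = m t
    rw [hcl2id t (hIsub ht), hmeeq t ht]
  have hOoo : ∀ t ∈ Set.Icc (0:ℝ) 1, Set.Ioo (-δ) (1+δ) ∈ 𝓝 t := fun t ht =>
    isOpen_Ioo.mem_nhds ⟨lt_of_lt_of_le (by linarith) ht.1, lt_of_le_of_lt ht.2 (by linarith)⟩
  have hbd : ∀ t ∈ Set.Icc (0:ℝ) 1, HasDerivAt b (D t) t := by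
    intro t ht
    have hev : b =ᶠ[𝓝 t] me := by
      filter_upwards [hOoo t ht] with x hx
      show me (cl2 x) = me x
      rw [hcl2id x (Set.Ioo_subset_Icc_self hx)]
    have h1 := (hmed t).congr_of_eventuallyEq hev
    rwa [haD t ht] at h1
  -- total length
  set L : ℝ := ∫ u in (0:ℝ)..1, m u with hLdef
  have hmIcc : ContinuousOn m (Set.uIcc (0:ℝ) 1) := by
    rw [Set.uIcc_of_le zero_le_one]; exact hmcont
  have hL : 0 < L :=
    intervalIntegral_pos_of_pos_on hmIcc.intervalIntegrable
      (fun x hx => hmpos x (Set.Ioo_subset_Icc_self hx)) one_pos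
  -- the reparameterizing function
  set f : ℝ → ℝ := fun t => (∫ u in (0:ℝ)..t, b u) / L with hfdef
  have hfd : ∀ t, HasDerivAt f (b t / L) t := fun t =>
    ((hbcont.integral_hasStrictDerivAt 0 t).hasDerivAt).div_const L
  have hfc : Continuous f := continuous_iff_continuousAt.2 fun t => (hfd t).continuousAt
  have hf0 : f 0 = 0 := by
    show (∫ u in (0:ℝ)..0, b u) / L = 0
    rw [intervalIntegral.integral_same]; simp
  have hf1 : f 1 = 1 := by
    have h1 : ∫ u in (0:ℝ)..1, b u = ∫ u in (0:ℝ)..1, m u :=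
      intervalIntegral.integral_congr fun x hx =>
        hbm x (by rwa [Set.uIcc_of_le zero_le_one] at hx)
    show (∫ u in (0:ℝ)..1, b u) / L = 1
    rw [h1, ← hLdef, div_self hL.ne']
  have hfmono : StrictMono f := by
    apply strictMono_of_deriv_pos
    intro t
    rw [(hfd t).deriv]
    exact div_pos (hbpos t) hL
  -- surjectivity of f
  have hfsurj : Function.Surjective f := by
    have htop : Filter.Tendsto f Filter.atTop Filter.atTop := by
      have hc : 0 < me (1+δ) := hδmem _ ⟨hδle, le_rfl⟩
      have hev : ∀ᶠ t in Filter.atTop,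
          ((∫ u in (0:ℝ)..(1+δ), b u) + me (1+δ) * (t - (1+δ))) / L = f t := by
        filter_upwards [Filter.eventually_ge_atTop (1+δ)] with t ht
        have hsplit : (∫ u in (0:ℝ)..(1+δ), b u) + ∫ u in (1+δ)..t, b u
            = ∫ u in (0:ℝ)..t, b u :=
          intervalIntegral.integral_add_adjacent_intervals
            (hbcont.intervalIntegrable _ _) (hbcont.intervalIntegrable _ _)
        have hconst : ∫ u in (1+δ)..t, b u = me (1+δ) * (t - (1+δ)) := by
          have heq : ∀ x ∈ Set.uIcc (1+δ) t, b x = me (1+δ) := by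
            intro x hx
            rw [Set.uIcc_of_le ht] at hx
            show me (cl2 x) = me (1+δ)
            congr 1
            show max (-δ) (min (1+δ) x) = 1+δ
            rw [min_eq_left hx.1, max_eq_right hδle]
          rw [intervalIntegral.integral_congr heq, intervalIntegral.integral_const,
            smul_eq_mul, mul_comm]
        show _ = (∫ u in (0:ℝ)..t, b u) / L
        rw [← hsplit, hconst]
      refine Filter.Tendsto.congr' hev ?_
      apply Filter.Tendsto.atTop_div_const hL
      apply Filter.tendsto_atTop_add_const_left
      apply Filter.Tendsto.const_mul_atTop hc
      apply Filter.tendsto_atTop_add_const_right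
      exact Filter.tendsto_id
    have hbot : Filter.Tendsto f Filter.atBot Filter.atBot := by
      have hc : 0 < me (-δ) := hδmem _ ⟨le_rfl, hδle⟩
      have hev : ∀ᶠ t in Filter.atBot,
          ((∫ u in (0:ℝ)..(-δ), b u) + me (-δ) * (t - (-δ))) / L = f t := by
        filter_upwards [Filter.eventually_le_atBot (-δ)] with t ht
        have hsplit : (∫ u in (0:ℝ)..(-δ), b u) + ∫ u in (-δ)..t, b u
            = ∫ u in (0:ℝ)..t, b u :=
          intervalIntegral.integral_add_adjacent_intervals
            (hbcont.intervalIntegrable _ _) (hbcont.intervalIntegrable _ _)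
        have hconst : ∫ u in (-δ)..t, b u = me (-δ) * (t - (-δ)) := by
          have heq : ∀ x ∈ Set.uIcc (-δ) t, b x = me (-δ) := by
            intro x hx
            rw [Set.uIcc_of_ge ht] at hx
            show me (cl2 x) = me (-δ)
            congr 1
            show max (-δ) (min (1+δ) x) = -δ
            rw [min_eq_right (le_trans hx.2 hδle), max_eq_left hx.2]
          rw [intervalIntegral.integral_congr heq, intervalIntegral.integral_const,
            smul_eq_mul, mul_comm]
        show _ = (∫ u in (0:ℝ)..t, b u) / L
        rw [← hsplit, hconst]
      refine Filter.Tendsto.congr' hev ?_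
      apply Filter.Tendsto.atBot_div_const hL
      apply Filter.tendsto_atBot_add_const_left
      apply Filter.Tendsto.const_mul_atBot hc
      apply Filter.tendsto_atBot_add_const_right
      exact Filter.tendsto_id
    exact hfc.surjective htop hbot
  -- the inverse function
  set finv : ℝ → ℝ := Function.invFun f with hfinvdef
  have hfinvf : ∀ t, finv (f t) = t := fun t =>
    Function.leftInverse_invFun hfmono.injective t
  have hffinv : ∀ u, f (finv u) = u := fun u =>
    Function.rightInverse_invFun hfsurj u
  have hfinvmono : Monotone finv := by
    intro u u' huu
    have h1 : f (finv u) ≤ f (finv u') := by rw [hffinv, hffinv]; exact huu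
    exact hfmono.le_iff_le.1 h1
  have hfinvsurj : Function.Surjective finv := fun t => ⟨f t, hfinvf t⟩
  have hfinvcont : Continuous finv := hfinvmono.continuous_of_surjective hfinvsurj
  have hfinvd : ∀ u, HasDerivAt finv (L / b (finv u)) u := by
    intro u
    have h1 := HasDerivAt.of_local_left_inverse hfinvcont.continuousAt
      (hfd (finv u)) (div_pos (hbpos _) hL).ne'
      (Filter.Eventually.of_forall hffinv)
    rwa [inv_div] at h1
  have hfinv0 : finv 0 = 0 := by
    have h1 := hfinvf 0
    rwa [hf0] at h1
  have hfinv1 : finv 1 = 1 := by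
    have h1 := hfinvf 1
    rwa [hf1] at h1
  have hfinvmem : ∀ u ∈ Set.Icc (0:ℝ) 1, finv u ∈ Set.Icc (0:ℝ) 1 := by
    intro u hu
    constructor
    · rw [← hfinv0]; exact hfinvmono hu.1
    · rw [← hfinv1]; exact hfinvmono hu.2
  -- global formula for the derivative of the reparameterized curve
  have hΦ : ∀ u, deriv (γ ∘ finv) u = (L / b (finv u)) • deriv γ (finv u) := by
    intro u
    by_cases hd : DifferentiableAt ℝ γ (finv u)
    · exact (hd.hasDerivAt.scomp u (hfinvd u)).deriv
    · have h1 : ¬ DifferentiableAt ℝ (γ ∘ finv) u := by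
        intro hφ
        apply hd
        have heq : γ = (γ ∘ finv) ∘ f := by
          funext t'
          simp only [Function.comp_apply, hfinvf t']
        rw [heq]
        have hφ' : DifferentiableAt ℝ (γ ∘ finv) (f (finv u)) := by rwa [hffinv u]
        exact hφ'.comp (finv u) (hfd (finv u)).differentiableAt
      rw [deriv_zero_of_not_differentiableAt h1, deriv_zero_of_not_differentiableAt hd,
        smul_zero]
  -- constant speed
  have hspeed : ∀ u ∈ Set.Icc (0:ℝ) 1, ‖deriv (γ ∘ finv) u‖ = L := by
    intro u hu
    have htI := hfinvmem u hu
    rw [hΦ u, hbm _ htI, ← hwG _ htI]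
    rw [norm_smul, Real.norm_eq_abs, abs_of_pos (div_pos hL (hmpos _ htI))]
    show L / m (finv u) * m (finv u) = L
    rw [div_mul_cancel₀ _ (hmpos _ htI).ne']
  -- f is C² on [0,1]
  have hfC2 : ContDiffOn ℝ 2 f (Set.Icc 0 1) := by
    rw [show (2 : WithTop ℕ∞) = 1 + 1 by norm_num, contDiffOn_succ_iff_derivWithin hI]
    refine ⟨fun t ht => (hfd t).differentiableAt.differentiableWithinAt, by simp, ?_⟩
    have hmeC1 : ContDiff ℝ 1 me := by
      rw [contDiff_one_iff_deriv]
      refine ⟨fun t => (hmed t).differentiableAt, ?_⟩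
      have hde : deriv me = aext := funext fun t => (hmed t).deriv
      rw [hde]; exact hacont
    have hbC1 : ContDiffOn ℝ 1 b (Set.Icc 0 1) := by
      apply ContDiffOn.congr (hmeC1.contDiffOn)
      intro t ht
      show me (cl2 t) = me t
      rw [hcl2id t (hIsub ht)]
    have hgoal : ContDiffOn ℝ 1 (fun t => b t / L) (Set.Icc 0 1) := hbC1.div_const L
    apply hgoal.congr
    intro t ht
    rw [(hfd t).differentiableAt.derivWithin (hI t ht), (hfd t).deriv]
  -- the ODE for f
  have hfODE : ∀ t ∈ Set.Icc (0:ℝ) 1,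
      deriv (deriv f) t = β * ⟪s (γ t), deriv (γ ∘ finv) (f t)⟫ * (deriv f t)^2 := by
    intro t ht
    have hdf : deriv f = fun t' => b t' / L := funext fun t' => (hfd t').deriv
    have h1 : HasDerivAt (fun t' => b t' / L) (D t / L) t := (hbd t ht).div_const L
    have h2 : deriv (deriv f) t = D t / L := by rw [hdf]; exact h1.deriv
    have h3 : deriv f t = b t / L := (hfd t).deriv
    rw [h2, h3, hΦ (f t), hfinvf t, hbm t ht, ← hwG t ht, real_inner_smul_right, hD2 t ht]
    have hmne : m t ≠ 0 := (hmpos t ht).ne'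
    field_simp
  -- the geodesic equation for the reparameterized curve
  have hmain : ∀ u ∈ Set.Icc (0:ℝ) 1,
      deriv (deriv (γ ∘ finv)) u
        - (β * ⟪s ((γ ∘ finv) u), deriv (γ ∘ finv) u⟫) • deriv (γ ∘ finv) u
        + (β * ‖deriv (γ ∘ finv) u‖ ^ 2) • s ((γ ∘ finv) u) = 0 := by
    intro u hu
    have htI : finv u ∈ Set.Icc (0:ℝ) 1 := hfinvmem u hu
    have hcomp_eq : (γ ∘ finv) u = γ (finv u) := rfl
    have hΦfun : deriv (γ ∘ finv) = fun u' => (L / b (finv u')) • deriv γ (finv u') :=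
      funext hΦ
    have hbt : b (finv u) = m (finv u) := hbm _ htI
    have hbne : b (finv u) ≠ 0 := (hbpos _).ne'
    have hmne : m (finv u) ≠ 0 := (hmpos _ htI).ne'
    by_cases hd2 : DifferentiableAt ℝ (deriv γ) (finv u)
    · -- Case A : the velocity field is differentiable at finv u
      have h1 : derivWithin (deriv γ) (Set.Icc 0 1) (finv u) = deriv (deriv γ) (finv u) :=
        hd2.derivWithin (hI _ htI)
      have h2 : derivWithin (deriv γ) (Set.Icc 0 1) (finv u) = A (finv u) :=
        derivWithin_congr (fun x hx => (hwG x hx).symm) ((hwG _ htI).symm)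
      have h3 : deriv (deriv γ) (finv u) = A (finv u) := by rw [← h1, h2]
      have hderivG : HasDerivAt (deriv γ) (A (finv u)) (finv u) := h3 ▸ hd2.hasDerivAt
      have h4 : HasDerivAt (fun u' => b (finv u')) (D (finv u) * (L / b (finv u))) u :=
        (hbd _ htI).comp u (hfinvd u)
      have h5 : HasDerivAt (fun u' => L / b (finv u'))
          (L * (-(D (finv u) * (L / b (finv u))) / (b (finv u)) ^ 2)) u := by
        have h6 := (h4.inv hbne).const_mul L
        convert h6 using 2
        · rfl
        · rfl
        · exact div_eq_mul_inv L _
      have h7 : HasDerivAt (fun u' => deriv γ (finv u')) ((L / b (finv u)) • A (finv u)) u :=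
        hderivG.scomp u (hfinvd u)
      have h8 : HasDerivAt (deriv (γ ∘ finv))
          ((L / b (finv u)) • ((L / b (finv u)) • A (finv u))
            + (L * (-(D (finv u) * (L / b (finv u))) / (b (finv u)) ^ 2))
              • ((fun u' => deriv γ (finv u')) u)) u := by
        rw [hΦfun]
        exact h5.smul h7
      rw [h8.deriv, hΦ u, hcomp_eq]
      simp only []
      rw [← hwG _ htI, hbt]
      rw [hAform _ htI, hD2 _ htI]
      have hin : ⟪s (γ (finv u)), (L / m (finv u)) • w (finv u)⟫
          = (L / m (finv u)) * ⟪s (γ (finv u)), w (finv u)⟫ := real_inner_smul_right _ _ _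
      have hnorm : ‖(L / m (finv u)) • w (finv u)‖ ^ 2
          = (L / m (finv u))^2 * (m (finv u))^2 := by
        rw [norm_smul, mul_pow, Real.norm_eq_abs, sq_abs]
      rw [hin, hnorm]
      match_scalars
      · field_simp
        ring
      · field_simp
        ring
    · -- Case B : junk values; the hypothesis forces β • s = 0
      have hne2 : ¬ DifferentiableAt ℝ (fun u' => deriv γ (finv u')) u := by
        intro h
        apply hd2
        have heq : deriv γ = (fun u' => deriv γ (finv u')) ∘ f := by
          funext t'
          simp only [Function.comp_apply, hfinvf t']
        rw [heq]
        have h' : DifferentiableAt ℝ (fun u' => deriv γ (finv u')) (f (finv u)) := by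
          rwa [hffinv u]
        exact h'.comp (finv u) (hfd (finv u)).differentiableAt
      have hφnd : ¬ DifferentiableAt ℝ (deriv (γ ∘ finv)) u := by
        intro h
        apply hne2
        have heq2 : (fun u' => deriv γ (finv u'))
            = fun u' => (b (finv u') / L) • deriv (γ ∘ finv) u' := by
          funext u'
          rw [hΦ u', smul_smul]
          have hbne' : b (finv u') ≠ 0 := (hbpos _).ne'
          have hone : b (finv u') / L * (L / b (finv u')) = 1 := by
            rw [div_mul_div_comm, mul_comm, div_self (mul_ne_zero hL.ne' hbne')]
          rw [hone, one_smul]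
        rw [heq2]
        exact (((hbd _ htI).comp u (hfinvd u)).differentiableAt.div_const L).smul h
      have hjunkφ : deriv (deriv (γ ∘ finv)) u = 0 :=
        deriv_zero_of_not_differentiableAt hφnd
      have hjunkγ : deriv (deriv γ) (finv u) = 0 :=
        deriv_zero_of_not_differentiableAt hd2
      have hgt := hgeo (finv u) htI
      rw [hjunkγ] at hgt
      have hkey : β • s (γ (finv u)) = 0 := by
        apply beta_smul_zero_aux (hvel (finv u) htI)
        linear_combination (norm := module) -hgt
      rw [hjunkφ, hcomp_eq]
      have hz1 : β * ⟪s (γ (finv u)), deriv (γ ∘ finv) u⟫ = 0 := by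
        rw [← real_inner_smul_left, hkey, inner_zero_left]
      have hz2 : (β * ‖deriv (γ ∘ finv) u‖^2) • s (γ (finv u)) = 0 := by
        rw [mul_comm, mul_smul, hkey, smul_zero]
      rw [hz1, hz2]
      simp
  -- assemble
  refine ⟨f, finv, hfmono.strictMonoOn _, hfC2, ?_, hf0, hf1,
    fun t _ => hfinvf t, fun u _ => hffinv u, hfODE, ⟨L, hspeed⟩, hmain⟩
  intro t ht
  constructor
  · calc (0:ℝ) = f 0 := hf0.symm
      _ ≤ f t := hfmono.monotone ht.1
  · calc f t ≤ f 1 := hfmono.monotone ht.2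
      _ = 1 := hf1
end

section
/- Let s : ℝ^n → ℝ^n be continuous and β ∈ ℝ. If φ : I → ℝ^n is a twice-differentiable curve on an interval I satisfying the reparameterized geodesic equation φ̈ − β (s(φ) · φ̇) φ̇ + β s(φ) ‖φ̇‖² = 0, then the Euclidean speed t ↦ ‖φ̇(t)‖² is constant on I. -/
open scoped RealInnerProductSpace

/-- **Constant Euclidean speed of reparameterized geodesics.**
If `s : ℝⁿ → ℝⁿ` is continuous and `φ` is a twice-differentiable curve on an interval `I`
satisfying the reparameterized geodesic equation
`φ̈ − β (s(φ)·φ̇) φ̇ + β s(φ) ‖φ̇‖² = 0`, then `t ↦ ‖φ̇(t)‖²` is constant on `I`. -/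
theorem constant_euclidean_speed
    (n : ℕ) (s : EuclideanSpace ℝ (Fin n) → EuclideanSpace ℝ (Fin n))
    (hs : Continuous s) (β : ℝ)
    (I : Set ℝ) (hI : Convex ℝ I)
    (φ : ℝ → EuclideanSpace ℝ (Fin n))
    (hφ : ∀ t ∈ I, DifferentiableAt ℝ φ t ∧ DifferentiableAt ℝ (deriv φ) t)
    (hgeo : ∀ t ∈ I,
      deriv (deriv φ) t
        - (β * ⟪s (φ t), deriv φ t⟫) • deriv φ t
        + (β * ‖deriv φ t‖ ^ 2) • s (φ t) = 0) :
    ∀ t₁ ∈ I, ∀ t₂ ∈ I, ‖deriv φ t₁‖ ^ 2 = ‖deriv φ t₂‖ ^ 2 := by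
  set g : ℝ → ℝ := fun t => ⟪deriv φ t, deriv φ t⟫ with hg
  have key : ∀ t ∈ I, HasDerivWithinAt g 0 I t := by
    intro t ht
    have hd : HasDerivAt (deriv φ) (deriv (deriv φ) t) t := (hφ t ht).2.hasDerivAt
    have h1 : HasDerivAt g
        (⟪deriv φ t, deriv (deriv φ) t⟫ + ⟪deriv (deriv φ) t, deriv φ t⟫) t :=
      hd.inner ℝ hd
    have h2 : deriv (deriv φ) t
        = (β * ⟪s (φ t), deriv φ t⟫) • deriv φ t - (β * ‖deriv φ t‖ ^ 2) • s (φ t) := by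
      linear_combination (norm := module) (hgeo t ht)
    have h3 : ⟪deriv (deriv φ) t, deriv φ t⟫ = 0 := by
      rw [h2, inner_sub_left, inner_smul_left, inner_smul_left,
        real_inner_self_eq_norm_sq, real_inner_comm]
      simp only [RCLike.star_def, conj_trivial]
      ring
    have h4 : ⟪deriv φ t, deriv (deriv φ) t⟫ = 0 := by
      rw [real_inner_comm]; exact h3
    rw [h3, h4, add_zero] at h1
    exact h1.hasDerivWithinAt
  intro t₁ h₁ t₂ h₂
  have := hI.norm_image_sub_le_of_norm_hasDerivWithin_le (C := 0) (f' := fun _ => (0 : ℝ))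
    key (fun x _ => by simp) h₂ h₁
  simp only [zero_mul, norm_le_zero_iff, sub_eq_zero] at this
  simpa only [hg, real_inner_self_eq_norm_sq] using this
end

section
/- Let s : ℝ^n → ℝ^n satisfy the homogeneity property s(c x) = c^{α−1} s(x) for all c > 0 and all x ∈ ℝ^n, where α > 0. Fix β ∈ ℝ and c > 0. If γ : I → ℝ^n is a twice-differentiable solution of the geodesic equation γ̈ − 2β (s(γ) · γ̇) γ̇ + β s(γ) ‖γ̇‖² = 0, then the rescaled curve ψ(t) = c γ(t) is a solution of the geodesic equation with inverse temperature β c^{−α}: ψ̈ − 2β c^{−α} (s(ψ) · ψ̇) ψ̇ + β c^{−α} s(ψ) ‖ψ̇‖² = 0. -/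
open scoped RealInnerProductSpace

/-! A homogeneous score turns the pointwise rescaling `(x, v, a) ↦ (c x, c v, c a)` of position,
velocity and acceleration into a rescaling of the geodesic residual: the factor `c ^ (α - 1)`
coming from `s` combines with the `c ^ 2` of the quadratic velocity terms into `c ^ (α + 1)`, and
multiplying the inverse temperature by `c ^ (-α)` leaves the common factor `c`. Since
differentiation commutes with multiplication by a constant, the residual of `c γ` at inverse
temperature `β c ^ (-α)` is `c` times that of `γ` at `β`, hence zero. -/

lemma rpow_neg_mul_rpow_sub_one_mul_sq {c : ℝ} (hc : 0 < c) (α : ℝ) :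
    c ^ (-α) * c ^ (α - 1) * c ^ 2 = c := by
  rw [← Real.rpow_natCast, mul_assoc, ← Real.rpow_add hc, ← Real.rpow_add hc]
  convert Real.rpow_one c using 2
  push_cast
  ring

lemma fermat_residual_const_smul {E : Type*} [NormedAddCommGroup E] [InnerProductSpace ℝ E]
    (s : E → E) {α c : ℝ} (hc : 0 < c) (β : ℝ) {x : E}
    (hs : s (c • x) = c ^ (α - 1) • s x) (v a : E) :
    c • a - (2 * (β * c ^ (-α)) * ⟪s (c • x), c • v⟫) • c • v
        + ((β * c ^ (-α)) * ‖c • v‖ ^ 2) • s (c • x)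
      = c • (a - (2 * β * ⟪s x, v⟫) • v + (β * ‖v‖ ^ 2) • s x) := by
  have hexp := rpow_neg_mul_rpow_sub_one_mul_sq hc α
  rw [hs, real_inner_smul_left, real_inner_smul_right, norm_smul, Real.norm_of_nonneg hc.le,
    smul_add, smul_sub]
  simp only [smul_smul]
  congr 2
  · congr 1
    linear_combination (2 * β * ⟪s x, v⟫) * hexp
  · linear_combination (β * ‖v‖ ^ 2) * hexp

theorem fermat_geodesic_rescaling_general
    (n : ℕ) (s : EuclideanSpace ℝ (Fin n) → EuclideanSpace ℝ (Fin n))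
    (α : ℝ)
    (hhom : ∀ c : ℝ, 0 < c → ∀ x, s (c • x) = c ^ (α - 1) • s x)
    (β c : ℝ) (hc : 0 < c)
    (I : Set ℝ)
    (γ : ℝ → EuclideanSpace ℝ (Fin n))
    (hgeo : ∀ t ∈ I,
      deriv (deriv γ) t
        - (2 * β * ⟪s (γ t), deriv γ t⟫) • deriv γ t
        + (β * ‖deriv γ t‖ ^ 2) • s (γ t) = 0) :
    ∀ t ∈ I,
      deriv (deriv (fun u => c • γ u)) t
        - (2 * (β * c ^ (-α)) * ⟪s (c • γ t), deriv (fun u => c • γ u) t⟫)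
            • deriv (fun u => c • γ u) t
        + ((β * c ^ (-α)) * ‖deriv (fun u => c • γ u) t‖ ^ 2) • s (c • γ t) = 0 := by
  intro t ht
  have hderiv : deriv (fun u => c • γ u) = fun u => c • deriv γ u :=
    funext fun _ => deriv_fun_const_smul_field c γ
  rw [hderiv, deriv_fun_const_smul_field,
    fermat_residual_const_smul s hc β (hhom c hc (γ t)), hgeo t ht, smul_zero]

/-- **Scaling of Fermat geodesics under homogeneous scores.**
If `s(c x) = c^{α−1} s(x)` for all `c > 0` (with `α > 0`), and `γ` solves the geodesic
equation `γ̈ − 2β (s(γ)·γ̇) γ̇ + β s(γ) ‖γ̇‖² = 0` on an interval `I`, then the rescaled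
curve `ψ = c γ` solves the geodesic equation with inverse temperature `β c^{−α}`. -/
theorem fermat_geodesic_rescaling
    (n : ℕ) (s : EuclideanSpace ℝ (Fin n) → EuclideanSpace ℝ (Fin n))
    (α : ℝ) (hα : 0 < α)
    (hhom : ∀ c : ℝ, 0 < c → ∀ x, s (c • x) = c ^ (α - 1) • s x)
    (β c : ℝ) (hc : 0 < c)
    (I : Set ℝ) (hI : Convex ℝ I)
    (γ : ℝ → EuclideanSpace ℝ (Fin n))
    (hγ : ∀ t ∈ I, DifferentiableAt ℝ γ t ∧ DifferentiableAt ℝ (deriv γ) t)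
    (hgeo : ∀ t ∈ I,
      deriv (deriv γ) t
        - (2 * β * ⟪s (γ t), deriv γ t⟫) • deriv γ t
        + (β * ‖deriv γ t‖ ^ 2) • s (γ t) = 0) :
    ∀ t ∈ I,
      deriv (deriv (fun u => c • γ u)) t
        - (2 * (β * c ^ (-α)) * ⟪s (c • γ t), deriv (fun u => c • γ u) t⟫)
            • deriv (fun u => c • γ u) t
        + ((β * c ^ (-α)) * ‖deriv (fun u => c • γ u) t‖ ^ 2) • s (c • γ t) = 0 :=
  fermat_geodesic_rescaling_general n s α hhom β c hc I γ hgeo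
end

section
/- Let s : ℝ^n → ℝ^n satisfy s(c x) = c^{α−1} s(x) for all c > 0 and x ∈ ℝ^n, where α > 0, and fix β ∈ ℝ and c > 0. If φ : I → ℝ^n is a twice-differentiable solution of the constant-Euclidean-speed geodesic equation φ̈ − β (s(φ) · φ̇) φ̇ + β s(φ) ‖φ̇‖² = 0, then ψ(t) = c φ(t) solves the same equation with inverse temperature β c^{−α}: ψ̈ − β c^{−α} (s(ψ) · ψ̇) ψ̇ + β c^{−α} s(ψ) ‖ψ̇‖² = 0. -/
open scoped RealInnerProductSpace

/-! With `ψ = c φ` one has `ψ̈ = c φ̈`, while by homogeneity of `s` both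
`⟪s ψ, ψ̇⟫ ψ̇` and `‖ψ̇‖² s ψ` pick up the factor `c^(α+1)`. Dividing `β` by `c^α` therefore
makes every term of the geodesic equation scale by the same factor `c`. -/

variable {E : Type*} [NormedAddCommGroup E] [InnerProductSpace ℝ E]

noncomputable def fermatGeodesicResidual (β : ℝ) (s : E → E) (φ : ℝ → E) (t : ℝ) : E :=
  deriv (deriv φ) t - (β * ⟪s (φ t), deriv φ t⟫) • deriv φ t
    + (β * ‖deriv φ t‖ ^ 2) • s (φ t)

lemma rpow_neg_mul_rpow_sub_one_mul_self {c : ℝ} (hc : 0 < c) (α : ℝ) :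
    c ^ (-α) * c ^ (α - 1) * c = 1 := by
  rw [← Real.rpow_add hc, show -α + (α - 1) = -1 by ring, Real.rpow_neg_one,
    inv_mul_cancel₀ hc.ne']

theorem fermatGeodesicResidual_const_smul {s : E → E} {α c : ℝ} (hc : 0 < c)
    (hhom : ∀ x, s (c • x) = c ^ (α - 1) • s x) (β : ℝ) (φ : ℝ → E) (t : ℝ) :
    fermatGeodesicResidual (β * c ^ (-α)) s (fun u => c • φ u) t =
      c • fermatGeodesicResidual β s φ t := by
  have hderiv : deriv (fun u => c • φ u) = fun u => c • deriv φ u :=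
    funext fun _ => deriv_fun_const_smul_field c φ
  have hscale := rpow_neg_mul_rpow_sub_one_mul_self hc α
  have hinner : β * c ^ (-α) * ⟪c ^ (α - 1) • s (φ t), c • deriv φ t⟫ =
      β * ⟪s (φ t), deriv φ t⟫ := by
    rw [real_inner_smul_left, real_inner_smul_right]
    linear_combination (β * ⟪s (φ t), deriv φ t⟫) * hscale
  have hnorm : β * c ^ (-α) * ‖c • deriv φ t‖ ^ 2 * c ^ (α - 1) =
      c * (β * ‖deriv φ t‖ ^ 2) := by
    rw [norm_smul, Real.norm_of_nonneg hc.le]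
    linear_combination (c * β * ‖deriv φ t‖ ^ 2) * hscale
  simp only [fermatGeodesicResidual, hderiv, hhom, deriv_fun_const_smul_field, hinner, smul_smul,
    hnorm]
  module
theorem fermat_constant_speed_geodesic_rescaling_general
    (n : ℕ) (s : EuclideanSpace ℝ (Fin n) → EuclideanSpace ℝ (Fin n))
    (α : ℝ)
    (hhom : ∀ c : ℝ, 0 < c → ∀ x, s (c • x) = c ^ (α - 1) • s x)
    (β c : ℝ) (hc : 0 < c)
    (I : Set ℝ)
    (φ : ℝ → EuclideanSpace ℝ (Fin n))
    (hgeo : ∀ t ∈ I,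
      deriv (deriv φ) t
        - (β * ⟪s (φ t), deriv φ t⟫) • deriv φ t
        + (β * ‖deriv φ t‖ ^ 2) • s (φ t) = 0) :
    ∀ t ∈ I,
      deriv (deriv (fun u => c • φ u)) t
        - ((β * c ^ (-α)) * ⟪s (c • φ t), deriv (fun u => c • φ u) t⟫)
            • deriv (fun u => c • φ u) t
        + ((β * c ^ (-α)) * ‖deriv (fun u => c • φ u) t‖ ^ 2) • s (c • φ t) = 0 := by
  intro t ht
  have hφ : fermatGeodesicResidual β s φ t = 0 := hgeo t ht
  have hψ := fermatGeodesicResidual_const_smul hc (hhom c hc) β φ t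
  rwa [hφ, smul_zero] at hψ

/-- **Scaling of constant-Euclidean-speed Fermat geodesics under homogeneous scores.**
If `s(c x) = c^{α−1} s(x)` for all `c > 0` (with `α > 0`), and `φ` solves the
constant-Euclidean-speed geodesic equation `φ̈ − β (s(φ)·φ̇) φ̇ + β s(φ) ‖φ̇‖² = 0`
on an interval `I`, then `ψ = c φ` solves the same equation with inverse temperature
`β c^{−α}`. -/
theorem fermat_constant_speed_geodesic_rescaling
    (n : ℕ) (s : EuclideanSpace ℝ (Fin n) → EuclideanSpace ℝ (Fin n))
    (α : ℝ) (hα : 0 < α)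
    (hhom : ∀ c : ℝ, 0 < c → ∀ x, s (c • x) = c ^ (α - 1) • s x)
    (β c : ℝ) (hc : 0 < c)
    (I : Set ℝ) (hI : Convex ℝ I)
    (φ : ℝ → EuclideanSpace ℝ (Fin n))
    (hφ : ∀ t ∈ I, DifferentiableAt ℝ φ t ∧ DifferentiableAt ℝ (deriv φ) t)
    (hgeo : ∀ t ∈ I,
      deriv (deriv φ) t
        - (β * ⟪s (φ t), deriv φ t⟫) • deriv φ t
        + (β * ‖deriv φ t‖ ^ 2) • s (φ t) = 0) :
    ∀ t ∈ I,
      deriv (deriv (fun u => c • φ u)) t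
        - ((β * c ^ (-α)) * ⟪s (c • φ t), deriv (fun u => c • φ u) t⟫)
            • deriv (fun u => c • φ u) t
        + ((β * c ^ (-α)) * ‖deriv (fun u => c • φ u) t‖ ^ 2) • s (c • φ t) = 0 :=
  fermat_constant_speed_geodesic_rescaling_general n s α hhom β c hc I φ hgeo
end
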